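/- Let X be a nonempty finite set, N ≥ 1, let q^ref be a Markov process on X^{N+2} with full support, and let q be a process on X^{N+2} reciprocal with respect to q^ref with full-support endpoint coupling q(x_0, x_1). Let m be a Markov process on X^{N+2} with full-support transition probabilities and m(x_0) = q(x_0). Then KL( q || m ) = Σ_{n=1}^{N} E_{q(x_0, x_1)} E_{q^ref(x_{t_{n-1}} | x_0, x_1)} KL( q^ref(x_{t_n} | x_{t_{n-1}}, x_1) || m(x_{t_n} | x_{t_{n-1}}) ) − E_{q(x_0, x_1)} E_{q^ref(x_{t_N} | x_0, x_1)} [ log m(x_1 | x_{t_N}) ] + E_{q(x_0, x_1)} [ log q(x_1 | x_0) ], where by convention x_{t_0} := x_0, so that for n = 1 the inner expectation over x_{t_0} is deterministic. -/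

import Mathlib

open Finset

/-- A probability mass function on a finite type. -/
def IsPMF {Z : Type*} [Fintype Z] (p : Z → ℝ) : Prop :=
  (∀ z, 0 ≤ p z) ∧ ∑ z, p z = 1

/-- KL divergence between two pmfs on a finite type (with `0 log 0 := 0`,
which is automatic since `0 * log (0/b) = 0`). -/
noncomputable def KLd {Z : Type*} [Fintype Z] (a b : Z → ℝ) : ℝ :=
  ∑ z, a z * Real.log (a z / b z)

/-- Trajectories with `N` intermediate time steps: indices `0, 1, …, N+1`,
where index `0` is time `0` and index `N+1` is time `1`. -/
abbrev Traj (X : Type*) (N : ℕ) := Fin (N + 2) → X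

variable {X : Type*} [Fintype X] [DecidableEq X] {N : ℕ}

/-- One-time marginal of a process at time index `i`. -/
noncomputable def timeMarg (q : Traj X N → ℝ) (i : Fin (N + 2)) (x : X) : ℝ :=
  ∑ ω : Traj X N, if ω i = x then q ω else 0

/-- Joint marginal of the endpoints `(x_0, x_1)`. -/
noncomputable def endMarg (q : Traj X N → ℝ) (a b : X) : ℝ :=
  ∑ ω : Traj X N, if ω 0 = a ∧ ω (Fin.last (N + 1)) = b then q ω else 0

/-- Joint marginal at the neighboring time indices `n` and `n+1`. -/
noncomputable def pairMarg (q : Traj X N → ℝ) (n : Fin (N + 1)) (y z : X) : ℝ :=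
  ∑ ω : Traj X N, if ω n.castSucc = y ∧ ω n.succ = z then q ω else 0

/-- Transition probability `q(x_{t_n} = z | x_{t_{n-1}} = y)` for the step from
time index `n` to `n+1`. -/
noncomputable def transP (q : Traj X N → ℝ) (n : Fin (N + 1)) (y z : X) : ℝ :=
  pairMarg q n y z / timeMarg q n.castSucc y

/-- Glue endpoints `a`, `b` and inner states `v` into a trajectory. -/
def glue (a : X) (v : Fin N → X) (b : X) : Traj X N :=
  Fin.cons a (Fin.snoc v b)

/-- The bridge `q(x_in | x_0 = a, x_1 = b)`, as a function of the inner states. -/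
noncomputable def bridge (q : Traj X N → ℝ) (a b : X) (v : Fin N → X) : ℝ :=
  q (glue a v b) / endMarg q a b

/-- A process is Markov if it factorizes through its one-step transitions. -/
def IsMarkov (q : Traj X N → ℝ) : Prop :=
  ∀ ω : Traj X N,
    q ω = timeMarg q 0 (ω 0) * ∏ n : Fin (N + 1), transP q n (ω n.castSucc) (ω n.succ)

/-- A process `q` is reciprocal w.r.t. a full-support reference process `qref` if its
bridges coincide with those of `qref` wherever they are defined. -/
def IsReciprocal (qref q : Traj X N → ℝ) : Prop :=
  ∀ a b : X, 0 < endMarg q a b → ∀ v : Fin N → X, bridge q a b v = bridge qref a b v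

/-- Reciprocal projection of `q` w.r.t. `qref`:
`proj_R(q)(x_0, x_in, x_1) = qref(x_in | x_0, x_1) · q(x_0, x_1)`. -/
noncomputable def projR (qref q : Traj X N → ℝ) (ω : Traj X N) : ℝ :=
  (qref ω / endMarg qref (ω 0) (ω (Fin.last (N + 1)))) *
    endMarg q (ω 0) (ω (Fin.last (N + 1)))

/-- Markovian projection of `q`:
`proj_M(q)(x_0, x_in, x_1) = q(x_0) ∏_{n=1}^{N+1} q(x_{t_n} | x_{t_{n-1}})`. -/
noncomputable def projM (q : Traj X N → ℝ) (ω : Traj X N) : ℝ :=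
  timeMarg q 0 (ω 0) * ∏ n : Fin (N + 1), transP q n (ω n.castSucc) (ω n.succ)

/-- Marginal of the bridge of `q` at time index `i`:
`q(x_{t_i} = y | x_0 = a, x_1 = b)`. -/
noncomputable def bridgeAt (q : Traj X N → ℝ) (i : Fin (N + 2)) (y a b : X) : ℝ :=
  (∑ ω : Traj X N, if ω 0 = a ∧ ω i = y ∧ ω (Fin.last (N + 1)) = b then q ω else 0) /
    endMarg q a b

/-- Conditional transition given the terminal point:
`q(x_{t_n} = z | x_{t_{n-1}} = y, x_1 = b)` for the step from time index `n` to `n+1`. -/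
noncomputable def condTrans (q : Traj X N → ℝ) (n : Fin (N + 1)) (y z b : X) : ℝ :=
  (∑ ω : Traj X N,
      if ω n.castSucc = y ∧ ω n.succ = z ∧ ω (Fin.last (N + 1)) = b then q ω else 0) /
    (∑ ω : Traj X N, if ω n.castSucc = y ∧ ω (Fin.last (N + 1)) = b then q ω else 0)

/-- Membership in `Π_N(p_0, p_1)`: a process with prescribed marginals at times 0 and 1. -/
def InPiN (p0 p1 : X → ℝ) (q : Traj X N → ℝ) : Prop :=
  IsPMF q ∧ (∀ x, timeMarg q 0 x = p0 x) ∧ (∀ x, timeMarg q (Fin.last (N + 1)) x = p1 x)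

/-- Membership in `Π(p_0, p_1)`: couplings on `X²` with prescribed marginals. -/
def InPi2 (p0 p1 : X → ℝ) (s : X × X → ℝ) : Prop :=
  IsPMF s ∧ (∀ a, ∑ b, s (a, b) = p0 a) ∧ (∀ b, ∑ a, s (a, b) = p1 b)

/-!
Reciprocity makes `q` the reference process reweighted by `q(x_0, x_1) / q^ref(x_0, x_1)`, and a
full-support Markov process is its endpoint coupling times the transitions of its bridge,
`q^ref(x_{t_n} | x_{t_{n-1}}, x_1)`: these are the Doob `h`-transform of its transitions with
`h = q^ref(x_1 | ·)`, and the `h`-factors telescope. Hence `log (q / m)` is a sum of one term per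
time step and `log q(x_1 | x_0)`, and conditioning each term on the endpoints and on the current
state yields the KL terms. Every use of the Markov property reduces to one exchange argument:
swapping the futures of two paths that agree at a time `t` preserves the product of their weights.
-/

section Mass

variable {Ω : Type*} [Fintype Ω]

noncomputable def mass (u : Ω → ℝ) (P : Ω → Prop) [DecidablePred P] : ℝ :=
  ∑ ω, if P ω then u ω else 0

lemma mass_congr (u : Ω → ℝ) {P Q : Ω → Prop} [DecidablePred P] [DecidablePred Q]
    (h : ∀ ω, P ω ↔ Q ω) : mass u P = mass u Q :=
  Finset.sum_congr rfl fun ω _ => if_congr (h ω) rfl rfl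

lemma mass_pos {u : Ω → ℝ} (hu : ∀ ω, 0 < u ω) {P : Ω → Prop} [DecidablePred P] {ω₀ : Ω}
    (h₀ : P ω₀) : 0 < mass u P :=
  Finset.sum_pos' (fun ω _ => by split_ifs <;> [exact (hu ω).le; exact le_rfl])
    ⟨ω₀, Finset.mem_univ _, by rw [if_pos h₀]; exact hu ω₀⟩

lemma mass_eq_mul_mass {u v : Ω → ℝ} {P : Ω → Prop} [DecidablePred P] (c : ℝ)
    (h : ∀ ω, P ω → u ω = c * v ω) : mass u P = c * mass v P := by
  rw [mass, mass, Finset.mul_sum]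
  refine Finset.sum_congr rfl fun ω _ => ?_
  split_ifs with hω
  · exact h ω hω
  · rw [mul_zero]

lemma mass_mul_mass (u v : Ω → ℝ) (P Q : Ω → Prop) [DecidablePred P] [DecidablePred Q] :
    mass u P * mass v Q = ∑ p : Ω × Ω, if P p.1 ∧ Q p.2 then u p.1 * v p.2 else 0 := by
  simp only [mass, Finset.sum_mul_sum, ite_zero_mul_ite_zero, Fintype.sum_prod_type]

lemma sum_mul_comp_eq_sum_mass {κ : Type*} [Fintype κ] [DecidableEq κ] (u : Ω → ℝ)
    (c : Ω → κ) (F : κ → ℝ) :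
    ∑ ω, u ω * F (c ω) = ∑ t, mass u (fun ω => c ω = t) * F t := by
  rw [← Finset.sum_fiberwise Finset.univ c]
  refine Finset.sum_congr rfl fun t _ => ?_
  rw [mass, Finset.sum_mul, Finset.sum_filter]
  refine Finset.sum_congr rfl fun ω _ => ?_
  split_ifs with hω
  · rw [hω]
  · rw [zero_mul]

end Mass

section Splice

variable {X : Type*} {M : ℕ}

def splice (j : Fin (M + 1)) (ω ω' : Fin (M + 1) → X) : Fin (M + 1) → X :=
  fun i => if i ≤ j then ω i else ω' i

lemma splice_of_le {j i : Fin (M + 1)} (ω ω' : Fin (M + 1) → X) (hi : i ≤ j) :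
    splice j ω ω' i = ω i :=
  if_pos hi

lemma splice_of_ge {j i : Fin (M + 1)} {ω ω' : Fin (M + 1) → X} (h : ω j = ω' j) (hi : j ≤ i) :
    splice j ω ω' i = ω' i := by
  rcases hi.lt_or_eq with hi | rfl
  · exact if_neg hi.not_ge
  · rw [splice_of_le ω ω' le_rfl, h]

lemma splice_involutive (j : Fin (M + 1)) :
    Function.Involutive fun p : (Fin (M + 1) → X) × (Fin (M + 1) → X) =>
      (splice j p.1 p.2, splice j p.2 p.1) := by
  rintro ⟨ω, ω'⟩
  ext i <;> by_cases hi : i ≤ j <;> simp [splice, hi]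

/-- Every transition factor survives, possibly moved to the other path. -/
lemma chain_weight_splice_mul {p : X → ℝ} {K : Fin M → X → X → ℝ}
    {u : (Fin (M + 1) → X) → ℝ} (hu : ∀ ω, u ω = p (ω 0) * ∏ t, K t (ω t.castSucc) (ω t.succ))
    {j : Fin (M + 1)} {ω ω' : Fin (M + 1) → X} (h : ω j = ω' j) :
    u (splice j ω ω') * u (splice j ω' ω) = u ω * u ω' := by
  have hstep : ∀ t : Fin M,
      K t (splice j ω ω' t.castSucc) (splice j ω ω' t.succ) *
          K t (splice j ω' ω t.castSucc) (splice j ω' ω t.succ) =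
        K t (ω t.castSucc) (ω t.succ) * K t (ω' t.castSucc) (ω' t.succ) := by
    intro t
    by_cases hsucc : t.succ ≤ j
    · have hcs : t.castSucc ≤ j := Fin.castSucc_le_succ t |>.trans hsucc
      simp only [splice, if_pos hcs, if_pos hsucc]
    by_cases hcs : t.castSucc ≤ j
    · have htj : t.castSucc = j := le_antisymm hcs (Fin.le_castSucc_iff.2 (not_le.1 hsucc))
      rw [splice_of_le ω ω' hcs, splice_of_le ω' ω hcs]
      simp only [splice, if_neg hsucc]
      rw [htj, h]
      ring
    · simp only [splice, if_neg hcs, if_neg hsucc]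
      ring
  simp only [hu, splice_of_le _ _ (Fin.zero_le j)]
  rw [mul_mul_mul_comm, ← Finset.prod_mul_distrib, Finset.prod_congr rfl fun t _ => hstep t,
    Finset.prod_mul_distrib, mul_mul_mul_comm]

/-- Given the present state `ω j = y`, the past event `P` is independent of the future event `Q`,
also after conditioning on a further future event `Q'`. -/
theorem mass_mul_mass_swap [Fintype X] [DecidableEq X] {p : X → ℝ} {K : Fin M → X → X → ℝ}
    {u : (Fin (M + 1) → X) → ℝ} (hu : ∀ ω, u ω = p (ω 0) * ∏ t, K t (ω t.castSucc) (ω t.succ))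
    (j : Fin (M + 1)) (y : X) {P Q Q' : (Fin (M + 1) → X) → Prop}
    [DecidablePred P] [DecidablePred Q] [DecidablePred Q']
    (hP : ∀ ω ω', (∀ i ≤ j, ω i = ω' i) → (P ω ↔ P ω'))
    (hQ : ∀ ω ω', (∀ i, j ≤ i → ω i = ω' i) → (Q ω ↔ Q ω'))
    (hQ' : ∀ ω ω', (∀ i, j ≤ i → ω i = ω' i) → (Q' ω ↔ Q' ω')) :
    mass u (fun ω => P ω ∧ ω j = y ∧ Q ω) * mass u (fun ω => ω j = y ∧ Q' ω) =
      mass u (fun ω => P ω ∧ ω j = y ∧ Q' ω) * mass u (fun ω => ω j = y ∧ Q ω) := by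
  rw [mass_mul_mass, mass_mul_mass,
    ← Equiv.sum_comp (splice_involutive j).toPerm]
  refine Finset.sum_congr rfl fun ⟨ω, ω'⟩ _ => ?_
  simp only [Function.Involutive.coe_toPerm, splice_of_le _ _ le_rfl]
  by_cases hy : ω j = y ∧ ω' j = y
  · have hj : ω j = ω' j := hy.1.trans hy.2.symm
    have hPσ := hP (splice j ω ω') ω fun i hi => splice_of_le ω ω' hi
    have hQσ := hQ (splice j ω ω') ω' fun i hi => splice_of_ge hj hi
    have hQ'σ' := hQ' (splice j ω' ω) ω fun i hi => splice_of_ge hj.symm hi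
    refine if_congr ?_ (chain_weight_splice_mul hu hj) rfl
    rw [hPσ, hQσ, hQ'σ']
    tauto
  · rw [if_neg (by tauto), if_neg (by tauto)]

end Splice

section Bridge

variable {q : Traj X N → ℝ}

lemma timeMarg_eq_mass (q : Traj X N → ℝ) (i : Fin (N + 2)) (y : X) :
    timeMarg q i y = mass q fun ω => ω i = y :=
  rfl

lemma transP_eq_mass (q : Traj X N → ℝ) (n : Fin (N + 1)) (y z : X) :
    transP q n y z =
      (mass q fun ω => ω n.castSucc = y ∧ ω n.succ = z) / mass q fun ω => ω n.castSucc = y :=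
  rfl

lemma endMarg_eq_mass (q : Traj X N → ℝ) (a b : X) :
    endMarg q a b = mass q fun ω => ω 0 = a ∧ ω (Fin.last (N + 1)) = b :=
  rfl

lemma bridgeAt_eq_mass (q : Traj X N → ℝ) (i : Fin (N + 2)) (y a b : X) :
    bridgeAt q i y a b =
      (mass q fun ω => ω 0 = a ∧ ω i = y ∧ ω (Fin.last (N + 1)) = b) / endMarg q a b :=
  rfl

lemma condTrans_eq_mass (q : Traj X N → ℝ) (n : Fin (N + 1)) (y z b : X) :
    condTrans q n y z b =
      (mass q fun ω => ω n.castSucc = y ∧ ω n.succ = z ∧ ω (Fin.last (N + 1)) = b) /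
        mass q fun ω => ω n.castSucc = y ∧ ω (Fin.last (N + 1)) = b :=
  rfl

lemma timeMarg_pos (hpos : ∀ ω, 0 < q ω) (i : Fin (N + 2)) (y : X) : 0 < timeMarg q i y :=
  mass_pos hpos (ω₀ := fun _ => y) rfl

lemma mass_castSucc_last_pos (hpos : ∀ ω, 0 < q ω) (n : Fin (N + 1)) (y b : X) :
    0 < mass q fun ω => ω n.castSucc = y ∧ ω (Fin.last (N + 1)) = b :=
  mass_pos hpos (ω₀ := Function.update (fun _ => y) (Fin.last (N + 1)) b)
    ⟨Function.update_of_ne (Fin.castSucc_ne_last n) _ _, Function.update_self _ _ _⟩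

lemma condTrans_apply_pos (hpos : ∀ ω, 0 < q ω) (ω : Traj X N) (n : Fin (N + 1)) :
    0 < condTrans q n (ω n.castSucc) (ω n.succ) (ω (Fin.last (N + 1))) :=
  div_pos (mass_pos hpos (ω₀ := ω) ⟨rfl, rfl, rfl⟩) (mass_pos hpos (ω₀ := ω) ⟨rfl, rfl⟩)

/-- Doob's h-function `q(x_1 = b | x_{t_i} = y)`. -/
noncomputable def hFun (q : Traj X N → ℝ) (i : Fin (N + 2)) (y b : X) : ℝ :=
  mass q (fun ω => ω i = y ∧ ω (Fin.last (N + 1)) = b) / timeMarg q i y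

lemma IsMarkov.condTrans_mul_hFun (hq : IsMarkov q) (hpos : ∀ ω, 0 < q ω) (n : Fin (N + 1))
    (y z b : X) :
    condTrans q n y z b * hFun q n.castSucc y b = transP q n y z * hFun q n.succ z b := by
  have hswap := mass_mul_mass_swap hq n.succ z (P := fun ω => ω n.castSucc = y)
    (Q := fun ω => ω (Fin.last (N + 1)) = b) (Q' := fun _ => True)
    (fun ω ω' h => by rw [h _ (Fin.castSucc_le_succ n)])
    (fun ω ω' h => by rw [h _ (Fin.le_last _)]) (fun _ _ _ => Iff.rfl)
  simp only [and_true] at hswap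
  have hS := (mass_castSucc_last_pos hpos n y b).ne'
  have hT := (timeMarg_pos hpos n.castSucc y).ne'
  have hT' := (timeMarg_pos hpos n.succ z).ne'
  rw [condTrans_eq_mass, transP_eq_mass, hFun, hFun, timeMarg_eq_mass, timeMarg_eq_mass] at *
  field_simp
  linear_combination hswap

lemma hFun_last (hpos : ∀ ω, 0 < q ω) (b : X) : hFun q (Fin.last (N + 1)) b b = 1 := by
  rw [hFun, mass_congr q fun ω => and_self_iff]
  exact div_self (timeMarg_pos hpos _ b).ne'

lemma condTrans_last (hpos : ∀ ω, 0 < q ω) (y b : X) : condTrans q (Fin.last N) y b b = 1 := by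
  have hnum := mass_congr q fun ω =>
    show ω (Fin.last N).castSucc = y ∧ ω (Fin.last N).succ = b ∧ ω (Fin.last (N + 1)) = b ↔
      ω (Fin.last N).castSucc = y ∧ ω (Fin.last (N + 1)) = b by rw [Fin.succ_last, and_self]
  exact (congrArg (· / _) hnum).trans (div_self (mass_castSucc_last_pos hpos _ y b).ne')

theorem IsMarkov.eq_endMarg_mul_prod_condTrans (hq : IsMarkov q) (hpos : ∀ ω, 0 < q ω)
    (ω : Traj X N) :
    q ω = endMarg q (ω 0) (ω (Fin.last (N + 1))) * ∏ k : Fin N,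
      condTrans q k.castSucc (ω k.castSucc.castSucc) (ω k.castSucc.succ) (ω (Fin.last (N + 1))) := by
  set b := ω (Fin.last (N + 1))
  set H : Fin (N + 2) → ℝ := fun i => hFun q i (ω i) b
  have hH : ∀ i, 0 < H i := fun i =>
    div_pos (mass_pos hpos (ω₀ := ω) ⟨rfl, rfl⟩) (timeMarg_pos hpos i _)
  have htel : (∏ n : Fin (N + 1), condTrans q n (ω n.castSucc) (ω n.succ) b) * H 0 =
      ∏ n : Fin (N + 1), transP q n (ω n.castSucc) (ω n.succ) := by
    have hprod := Finset.prod_congr rfl fun n (_ : n ∈ Finset.univ) =>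
      hq.condTrans_mul_hFun hpos n (ω n.castSucc) (ω n.succ) b
    have hcs : ∏ n : Fin (N + 1), H n.castSucc = H 0 * ∏ n : Fin (N + 1), H n.succ := by
      rw [← Fin.prod_univ_succ, Fin.prod_univ_castSucc H, show H (Fin.last (N + 1)) = 1 from
        hFun_last hpos b, mul_one]
    rw [Finset.prod_mul_distrib, Finset.prod_mul_distrib, hcs, ← mul_assoc] at hprod
    exact mul_right_cancel₀ (Finset.prod_pos fun n _ => hH n.succ).ne' hprod
  have hlast : condTrans q (Fin.last N) (ω (Fin.last N).castSucc) (ω (Fin.last N).succ) b = 1 :=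
    condTrans_last hpos _ b
  rw [Fin.prod_univ_castSucc, hlast, mul_one] at htel
  have hT := (timeMarg_pos hpos 0 (ω 0)).ne'
  rw [hq ω, ← htel, endMarg_eq_mass]
  simp only [H, hFun]
  field_simp

/-- `q(x_{t_n} | x_0, x_{t_{n-1}}, x_1) = q(x_{t_n} | x_{t_{n-1}}, x_1)`. -/
lemma IsMarkov.mass_bridge_step (hq : IsMarkov q) (hpos : ∀ ω, 0 < q ω) (n : Fin (N + 1))
    (a y z b : X) :
    mass q (fun ω => ω 0 = a ∧ ω n.castSucc = y ∧ ω n.succ = z ∧ ω (Fin.last (N + 1)) = b) =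
      mass q (fun ω => ω 0 = a ∧ ω n.castSucc = y ∧ ω (Fin.last (N + 1)) = b) *
        condTrans q n y z b := by
  have hswap := mass_mul_mass_swap hq n.castSucc y (P := fun ω => ω 0 = a)
    (Q := fun ω => ω n.succ = z ∧ ω (Fin.last (N + 1)) = b)
    (Q' := fun ω => ω (Fin.last (N + 1)) = b)
    (fun ω ω' h => by rw [h _ (Fin.zero_le _)])
    (fun ω ω' h => by rw [h _ (Fin.castSucc_le_succ n), h _ (Fin.le_last _)])
    (fun ω ω' h => by rw [h _ (Fin.le_last _)])
  have hS := (mass_castSucc_last_pos hpos n y b).ne'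
  rw [condTrans_eq_mass, mul_div_assoc', eq_div_iff hS, hswap]

end Bridge

section Reciprocal

variable {qref q : Traj X N → ℝ}

lemma glue_eq_self {X : Type*} {N : ℕ} (ω : Traj X N) :
    glue (ω 0) (Fin.init (Fin.tail ω)) (ω (Fin.last (N + 1))) = ω := by
  conv_rhs => rw [← Fin.cons_self_tail ω, ← Fin.snoc_init_self (Fin.tail ω)]
  rfl

lemma IsReciprocal.apply_eq (hqR : IsReciprocal qref q) (hqend : ∀ a b, 0 < endMarg q a b)
    (hpos : ∀ ω, 0 < qref ω) (ω : Traj X N) :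
    q ω = endMarg q (ω 0) (ω (Fin.last (N + 1))) / endMarg qref (ω 0) (ω (Fin.last (N + 1))) *
      qref ω := by
  have h := hqR (ω 0) (ω (Fin.last (N + 1))) (hqend _ _) (Fin.init (Fin.tail ω))
  rw [bridge, bridge, glue_eq_self] at h
  have hE : endMarg qref (ω 0) (ω (Fin.last (N + 1))) ≠ 0 :=
    (mass_pos hpos (ω₀ := ω) ⟨rfl, rfl⟩).ne'
  rw [div_eq_div_iff (hqend _ _).ne' hE] at h
  field_simp
  linear_combination h

lemma IsReciprocal.mass_eq (hqR : IsReciprocal qref q) (hqend : ∀ a b, 0 < endMarg q a b)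
    (hpos : ∀ ω, 0 < qref ω) (a b : X) (R : Traj X N → Prop) [DecidablePred R] :
    mass q (fun ω => ω 0 = a ∧ R ω ∧ ω (Fin.last (N + 1)) = b) =
      endMarg q a b * ((mass qref fun ω => ω 0 = a ∧ R ω ∧ ω (Fin.last (N + 1)) = b) /
        endMarg qref a b) := by
  rw [mass_eq_mul_mass (endMarg q a b / endMarg qref a b) fun ω hω => by
    rw [hqR.apply_eq hqend hpos ω, hω.1, hω.2.2]]
  ring

lemma IsReciprocal.pos (hqR : IsReciprocal qref q) (hqend : ∀ a b, 0 < endMarg q a b)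
    (hpos : ∀ ω, 0 < qref ω) (ω : Traj X N) : 0 < q ω := by
  rw [hqR.apply_eq hqend hpos ω]
  exact mul_pos (div_pos (hqend _ _) (mass_pos hpos (ω₀ := ω) ⟨rfl, rfl⟩)) (hpos ω)

lemma IsReciprocal.eq_endMarg_mul_prod_condTrans (hqR : IsReciprocal qref q)
    (hqend : ∀ a b, 0 < endMarg q a b) (hpos : ∀ ω, 0 < qref ω) (hM : IsMarkov qref)
    (ω : Traj X N) :
    q ω = endMarg q (ω 0) (ω (Fin.last (N + 1))) * ∏ k : Fin N, condTrans qref k.castSucc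
      (ω k.castSucc.castSucc) (ω k.castSucc.succ) (ω (Fin.last (N + 1))) := by
  have hE : endMarg qref (ω 0) (ω (Fin.last (N + 1))) ≠ 0 :=
    (mass_pos hpos (ω₀ := ω) ⟨rfl, rfl⟩).ne'
  rw [hqR.apply_eq hqend hpos ω, hM.eq_endMarg_mul_prod_condTrans hpos ω]
  field_simp

lemma sum_mul_endpoints (q : Traj X N → ℝ) (F : X → X → ℝ) :
    ∑ ω, q ω * F (ω 0) (ω (Fin.last (N + 1))) = ∑ a, ∑ b, endMarg q a b * F a b := by
  rw [sum_mul_comp_eq_sum_mass q (fun ω => (ω 0, ω (Fin.last (N + 1)))) fun t => F t.1 t.2,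
    Fintype.sum_prod_type]
  refine Finset.sum_congr rfl fun a _ => Finset.sum_congr rfl fun b _ => ?_
  rw [endMarg_eq_mass, mass_congr q fun ω => Prod.ext_iff]

lemma IsReciprocal.sum_mul_bridgeAt (hqR : IsReciprocal qref q)
    (hqend : ∀ a b, 0 < endMarg q a b) (hpos : ∀ ω, 0 < qref ω) (i : Fin (N + 2))
    (G : X → X → X → ℝ) :
    ∑ ω, q ω * G (ω 0) (ω i) (ω (Fin.last (N + 1))) =
      ∑ a, ∑ b, endMarg q a b * ∑ y, bridgeAt qref i y a b * G a y b := by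
  rw [sum_mul_comp_eq_sum_mass q (fun ω => (ω 0, ω (Fin.last (N + 1)), ω i))
    fun t => G t.1 t.2.2 t.2.1]
  simp only [Fintype.sum_prod_type, Finset.mul_sum]
  refine Finset.sum_congr rfl fun a _ => Finset.sum_congr rfl fun b _ =>
    Finset.sum_congr rfl fun y _ => ?_
  rw [mass_congr q (Q := fun ω => ω 0 = a ∧ ω i = y ∧ ω (Fin.last (N + 1)) = b) fun ω => by
      simp only [Prod.mk.injEq]; tauto,
    hqR.mass_eq hqend hpos, bridgeAt_eq_mass, mul_assoc]

lemma IsReciprocal.sum_mul_condTrans (hqR : IsReciprocal qref q)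
    (hqend : ∀ a b, 0 < endMarg q a b) (hpos : ∀ ω, 0 < qref ω) (hM : IsMarkov qref)
    (n : Fin (N + 1)) (H : X → X → X → X → ℝ) :
    ∑ ω, q ω * H (ω 0) (ω n.castSucc) (ω n.succ) (ω (Fin.last (N + 1))) =
      ∑ a, ∑ b, endMarg q a b *
        ∑ y, bridgeAt qref n.castSucc y a b * ∑ z, condTrans qref n y z b * H a y z b := by
  rw [sum_mul_comp_eq_sum_mass q (fun ω => (ω 0, ω (Fin.last (N + 1)), ω n.castSucc, ω n.succ))
    fun t => H t.1 t.2.2.1 t.2.2.2 t.2.1]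
  simp only [Fintype.sum_prod_type, Finset.mul_sum]
  refine Finset.sum_congr rfl fun a _ => Finset.sum_congr rfl fun b _ =>
    Finset.sum_congr rfl fun y _ => Finset.sum_congr rfl fun z _ => ?_
  rw [mass_congr q
      (Q := fun ω => ω 0 = a ∧ (ω n.castSucc = y ∧ ω n.succ = z) ∧ ω (Fin.last (N + 1)) = b)
      fun ω => by simp only [Prod.mk.injEq]; tauto,
    hqR.mass_eq hqend hpos, mass_congr qref fun ω => by rw [and_assoc],
    hM.mass_bridge_step hpos, bridgeAt_eq_mass]
  ring

end Reciprocal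

lemma Real.log_mul_prod_div {ι : Type*} [Fintype ι] {e p r : ℝ} {c d : ι → ℝ} (he : 0 < e)
    (hp : 0 < p) (hr : 0 < r) (hc : ∀ k, 0 < c k) (hd : ∀ k, 0 < d k) :
    Real.log (e * (∏ k, c k) / (p * ((∏ k, d k) * r))) =
      ∑ k, Real.log (c k / d k) - Real.log r + Real.log (e / p) := by
  have hcd : ∀ k, 0 < c k / d k := fun k => div_pos (hc k) (hd k)
  have hprod : e * (∏ k, c k) / (p * ((∏ k, d k) * r)) = e / p * (∏ k, c k / d k) / r := by
    rw [Finset.prod_div_distrib]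
    field_simp [(Finset.prod_pos fun k _ => hd k).ne']
  have hprod_pos : 0 < ∏ k, c k / d k := Finset.prod_pos fun k _ => hcd k
  rw [hprod, Real.log_div (mul_pos (div_pos he hp) hprod_pos).ne' hr.ne',
    Real.log_mul (div_pos he hp).ne' hprod_pos.ne', Real.log_prod fun k _ => (hcd k).ne']
  ring

theorem kl_decomposition_markov_general
    {X : Type*} [Fintype X] [DecidableEq X] {N : ℕ}
    (qref : Traj X N → ℝ) (hqrefpos : ∀ ω, 0 < qref ω)
    (hqrefM : IsMarkov qref)
    (q : Traj X N → ℝ) (hqR : IsReciprocal qref q)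
    (hqend : ∀ a b : X, 0 < endMarg q a b)
    (m : Traj X N → ℝ) (hmM : IsMarkov m)
    (hmpos : ∀ (n : Fin (N + 1)) (y z : X), 0 < transP m n y z)
    (hm0 : ∀ x, timeMarg m 0 x = timeMarg q 0 x) :
    KLd q m =
      (∑ k : Fin N, ∑ a : X, ∑ b : X, endMarg q a b *
          ∑ y : X, bridgeAt qref k.castSucc.castSucc y a b *
            KLd (fun z : X => condTrans qref k.castSucc y z b)
                (fun z : X => transP m k.castSucc y z)) -
        (∑ a : X, ∑ b : X, endMarg q a b *
          ∑ y : X, bridgeAt qref ((Fin.last N).castSucc) y a b *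
            Real.log (transP m (Fin.last N) y b)) +
        ∑ a : X, ∑ b : X, endMarg q a b *
          Real.log (endMarg q a b / timeMarg q 0 a) := by
  have hm : ∀ ω, m ω = timeMarg q 0 (ω 0) *
      ((∏ k : Fin N, transP m k.castSucc (ω k.castSucc.castSucc) (ω k.castSucc.succ)) *
        transP m (Fin.last N) (ω (Fin.last N).castSucc) (ω (Fin.last (N + 1)))) := fun ω => by
    rw [hmM ω, hm0, Fin.prod_univ_castSucc, Fin.succ_last]
  have hlog : ∀ ω, Real.log (q ω / m ω) =
      ∑ k : Fin N, Real.log (condTrans qref k.castSucc (ω k.castSucc.castSucc)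
          (ω k.castSucc.succ) (ω (Fin.last (N + 1))) /
          transP m k.castSucc (ω k.castSucc.castSucc) (ω k.castSucc.succ)) -
        Real.log (transP m (Fin.last N) (ω (Fin.last N).castSucc) (ω (Fin.last (N + 1)))) +
        Real.log (endMarg q (ω 0) (ω (Fin.last (N + 1))) / timeMarg q 0 (ω 0)) := fun ω => by
    rw [hqR.eq_endMarg_mul_prod_condTrans hqend hqrefpos hqrefM ω, hm ω]
    exact Real.log_mul_prod_div (hqend _ _) (timeMarg_pos (hqR.pos hqend hqrefpos) 0 _)
      (hmpos _ _ _) (fun k => condTrans_apply_pos hqrefpos ω k.castSucc) fun k => hmpos _ _ _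
  rw [show KLd q m = ∑ ω, q ω * Real.log (q ω / m ω) from rfl]
  conv_lhs =>
    simp only [hlog, mul_add, mul_sub, Finset.mul_sum, Finset.sum_add_distrib,
      Finset.sum_sub_distrib]
    rw [Finset.sum_comm]
  rw [sum_mul_endpoints q fun a b => Real.log (endMarg q a b / timeMarg q 0 a),
    hqR.sum_mul_bridgeAt hqend hqrefpos (Fin.last N).castSucc
      fun _ y b => Real.log (transP m (Fin.last N) y b)]
  congr 2
  exact Finset.sum_congr rfl fun k _ => hqR.sum_mul_condTrans hqend hqrefpos hqrefM k.castSucc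
    fun _ y z b => Real.log (condTrans qref k.castSucc y z b / transP m k.castSucc y z)

/-- KL decomposition against a Markov process. For `q` reciprocal
w.r.t. the full-support Markov reference `q^ref`, with full-support endpoint coupling,
and any Markov `m` with full-support transitions and `m(x_0) = q(x_0)`:
`KL(q ‖ m) = Σ_{n=1}^{N} E_{q(x_0,x_1)} E_{q^ref(x_{t_{n-1}}|x_0,x_1)}
  KL(q^ref(x_{t_n}|x_{t_{n-1}},x_1) ‖ m(x_{t_n}|x_{t_{n-1}}))
  − E_{q(x_0,x_1)} E_{q^ref(x_{t_N}|x_0,x_1)}[log m(x_1|x_{t_N})]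
  + E_{q(x_0,x_1)}[log q(x_1|x_0)]`
(by convention `x_{t_0} := x_0`, so for `n = 1` the inner expectation is deterministic). -/
theorem kl_decomposition_markov
    {X : Type*} [Fintype X] [DecidableEq X] [Nonempty X] {N : ℕ} (hN : 1 ≤ N)
    (qref : Traj X N → ℝ) (hqref : IsPMF qref) (hqrefpos : ∀ ω, 0 < qref ω)
    (hqrefM : IsMarkov qref)
    (q : Traj X N → ℝ) (hq : IsPMF q) (hqR : IsReciprocal qref q)
    (hqend : ∀ a b : X, 0 < endMarg q a b)
    (m : Traj X N → ℝ) (hm : IsPMF m) (hmM : IsMarkov m)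
    (hmpos : ∀ (n : Fin (N + 1)) (y z : X), 0 < transP m n y z)
    (hm0 : ∀ x, timeMarg m 0 x = timeMarg q 0 x) :
    KLd q m =
      (∑ k : Fin N, ∑ a : X, ∑ b : X, endMarg q a b *
          ∑ y : X, bridgeAt qref k.castSucc.castSucc y a b *
            KLd (fun z : X => condTrans qref k.castSucc y z b)
                (fun z : X => transP m k.castSucc y z)) -
        (∑ a : X, ∑ b : X, endMarg q a b *
          ∑ y : X, bridgeAt qref ((Fin.last N).castSucc) y a b *
            Real.log (transP m (Fin.last N) y b)) +
        ∑ a : X, ∑ b : X, endMarg q a b *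
          Real.log (endMarg q a b / timeMarg q 0 a) :=
  kl_decomposition_markov_general qref hqrefpos hqrefM q hqR hqend m hmM hmpos hm0
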